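/- For every integer m ≥ 2, every 2-edge-colouring of K_{5m} contains m pairwise vertex-disjoint triangles all monochromatic in the same colour, and there exists a 2-edge-colouring of K_{5m-1} with no such collection; i.e., R(mK_3) = 5m. -/

import Mathlib

/-- A monochromatic triangle of colour `c` in a 2-edge-coloured complete graph. -/
def MonoTriC {n : ℕ} (χ : Fin n → Fin n → Bool) (c : Bool) (t : Finset (Fin n)) : Prop :=
  t.card = 3 ∧ ∀ x ∈ t, ∀ y ∈ t, x ≠ y → χ x y = c

namespace BES


def Mo {α : Type*} (χ : α → α → Bool) (c : Bool) (t : Finset α) : Prop :=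
  t.card = 3 ∧ ∀ x ∈ t, ∀ y ∈ t, x ≠ y → χ x y = c

variable {α : Type*} [DecidableEq α] {χ : α → α → Bool}

lemma bool_resolve {b c : Bool} (h : b ≠ c) : b = !c := by
  cases b <;> cases c <;> simp_all

lemma bool_resolve' {b c : Bool} (h : b ≠ !c) : b = c := by
  cases b <;> cases c <;> simp_all

lemma mk_mono (hs : ∀ a b, χ a b = χ b a) {c : Bool} {x y z : α}
    (hxy : x ≠ y) (hxz : x ≠ z) (hyz : y ≠ z)
    (h1 : χ x y = c) (h2 : χ x z = c) (h3 : χ y z = c) : Mo χ c {x, y, z} := by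
  constructor
  · rw [Finset.card_eq_three]; exact ⟨x, y, z, hxy, hxz, hyz, rfl⟩
  · intro p hp q hq hpq
    simp only [Finset.mem_insert, Finset.mem_singleton] at hp hq
    rcases hp with rfl | rfl | rfl <;> rcases hq with rfl | rfl | rfl <;>
      first
        | exact absurd rfl hpq
        | assumption
        | (rw [hs]; assumption)

lemma mono_edge {c : Bool} {t : Finset α} (h : Mo χ c t) {x y : α}
    (hx : x ∈ t) (hy : y ∈ t) (hxy : x ≠ y) : χ x y = c := h.2 x hx y hy hxy

/-- extract the other two vertices of a monochromatic triangle containing `w` -/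
lemma mono_extract {c : Bool} {t : Finset α} (h : Mo χ c t) {w : α} (hw : w ∈ t) :
    ∃ a b, a ≠ b ∧ w ≠ a ∧ w ≠ b ∧ t = {w, a, b} := by
  obtain ⟨x, y, z, hxy, hxz, hyz, rfl⟩ := Finset.card_eq_three.mp h.1
  simp only [Finset.mem_insert, Finset.mem_singleton] at hw
  rcases hw with rfl | rfl | rfl
  · exact ⟨y, z, hyz, hxy, hxz, rfl⟩
  · refine ⟨x, z, hxz, Ne.symm hxy, hyz, ?_⟩
    ext u; simp only [Finset.mem_insert, Finset.mem_singleton]; tauto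
  · refine ⟨x, y, hxy, Ne.symm hxz, Ne.symm hyz, ?_⟩
    ext u; simp only [Finset.mem_insert, Finset.mem_singleton]; tauto

lemma three_elems {s : Finset α} (h : 3 ≤ s.card) :
    ∃ x y z, x ∈ s ∧ y ∈ s ∧ z ∈ s ∧ x ≠ y ∧ x ≠ z ∧ y ≠ z := by
  obtain ⟨t, hts, ht⟩ := Finset.exists_subset_card_eq (n := 3) h
  obtain ⟨x, y, z, hxy, hxz, hyz, rfl⟩ := Finset.card_eq_three.mp ht
  exact ⟨x, y, z, hts (by simp), hts (by simp), hts (by simp), hxy, hxz, hyz⟩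

lemma ramsey6 (hs : ∀ a b, χ a b = χ b a) {V : Finset α} (h6 : 6 ≤ V.card) :
    ∃ c t, Mo χ c t ∧ t ⊆ V := by
  have hne : V.Nonempty := Finset.card_pos.mp (by omega)
  obtain ⟨v, hv⟩ := hne
  have hW : 5 ≤ (V.erase v).card := by
    rw [Finset.card_erase_of_mem hv]; omega
  have hsplit := Finset.card_filter_add_card_filter_not
    (s := V.erase v) (p := fun q => χ v q = true)
  simp only [Bool.not_eq_true] at hsplit
  have hsplit' : ((V.erase v).filter (fun q => χ v q = true)).card +
      ((V.erase v).filter (fun q => χ v q = false)).card = (V.erase v).card := hsplit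
  have hc : ∃ c : Bool, 3 ≤ ((V.erase v).filter (fun q => χ v q = c)).card := by
    by_contra hcon
    push_neg at hcon
    have h1 := hcon true; have h2 := hcon false; omega
  obtain ⟨c, hc3⟩ := hc
  obtain ⟨x, y, z, hx, hy, hz, hxy, hxz, hyz⟩ := three_elems hc3
  simp only [Finset.mem_filter, Finset.mem_erase] at hx hy hz
  have hvx : v ≠ x := Ne.symm hx.1.1
  have hvy : v ≠ y := Ne.symm hy.1.1
  have hvz : v ≠ z := Ne.symm hz.1.1
  by_cases exy : χ x y = c
  · exact ⟨c, {v, x, y}, mk_mono hs hvx hvy hxy hx.2 hy.2 exy,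
      by intro u hu; simp only [Finset.mem_insert, Finset.mem_singleton] at hu
         rcases hu with rfl | rfl | rfl; exact hv; exact hx.1.2; exact hy.1.2⟩
  by_cases exz : χ x z = c
  · exact ⟨c, {v, x, z}, mk_mono hs hvx hvz hxz hx.2 hz.2 exz,
      by intro u hu; simp only [Finset.mem_insert, Finset.mem_singleton] at hu
         rcases hu with rfl | rfl | rfl; exact hv; exact hx.1.2; exact hz.1.2⟩
  by_cases eyz : χ y z = c
  · exact ⟨c, {v, y, z}, mk_mono hs hvy hvz hyz hy.2 hz.2 eyz,
      by intro u hu; simp only [Finset.mem_insert, Finset.mem_singleton] at hu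
         rcases hu with rfl | rfl | rfl; exact hv; exact hy.1.2; exact hz.1.2⟩
  · exact ⟨!c, {x, y, z}, mk_mono hs hxy hxz hyz (bool_resolve exy) (bool_resolve exz)
      (bool_resolve eyz),
      by intro u hu; simp only [Finset.mem_insert, Finset.mem_singleton] at hu
         rcases hu with rfl | rfl | rfl; exact hx.1.2; exact hy.1.2; exact hz.1.2⟩

lemma greedy (hs : ∀ a b, χ a b = χ b a) (c : Bool) :
    ∀ (k : ℕ) (V : Finset α), 3 * k + 3 ≤ V.card →
    (∀ t, t ⊆ V → ¬ Mo χ (!c) t) →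
    ∃ T : Finset (Finset α), T.card = k ∧
      (↑T : Set (Finset α)).Pairwise (fun a b => Disjoint a b) ∧
      ∀ t ∈ T, Mo χ c t ∧ t ⊆ V := by
  intro k
  induction k with
  | zero => intro V _ _; exact ⟨∅, by simp, by simp, by simp⟩
  | succ n ih =>
    intro V hcard hno
    obtain ⟨c', t, hmo, htV⟩ := ramsey6 hs (V := V) (by omega)
    have hcc : c' = c := by
      by_contra h
      rw [bool_resolve h] at hmo
      exact hno t htV hmo
    subst hcc
    have ht3 : t.card = 3 := hmo.1
    have hVt : 3 * n + 3 ≤ (V \ t).card := by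
      rw [Finset.card_sdiff_of_subset htV]; omega
    obtain ⟨T, hTcard, hTpw, hTmem⟩ := ih (V \ t) hVt
      (fun t' ht' => hno t' (ht'.trans (Finset.sdiff_subset)))
    have htnotin : t ∉ T := by
      intro h
      have := (hTmem t h).2
      have : t ⊆ V \ t := this
      have hne : t.Nonempty := Finset.card_pos.mp (by omega)
      obtain ⟨x, hx⟩ := hne
      exact (Finset.mem_sdiff.mp (this hx)).2 hx
    refine ⟨insert t T, ?_, ?_, ?_⟩
    · rw [Finset.card_insert_of_notMem htnotin, hTcard]
    · rw [Finset.coe_insert]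
      refine (Set.pairwise_insert_of_symmetric_of_notMem
        (r := fun a b => Disjoint a b) (by simpa using htnotin)).mpr ⟨hTpw, ?_⟩
      intro u hu
      exact Finset.disjoint_right.mpr fun x hx =>
        (Finset.mem_sdiff.mp ((hTmem u (by simpa using hu)).2 hx)).2
    · intro u hu
      rcases Finset.mem_insert.mp hu with rfl | hu'
      · exact ⟨hmo, htV⟩
      · exact ⟨(hTmem u hu').1, (hTmem u hu').2.trans Finset.sdiff_subset⟩



set_option maxRecDepth 10000 in
lemma nine : ∀ f : Fin 3 → Fin 3 → Bool,
    (∃ i j1 j2, j1 ≠ j2 ∧ f i j1 = false ∧ f i j2 = false) ∨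
    (∃ j i1 i2, i1 ≠ i2 ∧ f i1 j = true ∧ f i2 j = true) := by decide

lemma bowtie (hs : ∀ a b, χ a b = χ b a) {V : Finset α}
    (hR : ∃ t, Mo χ true t ∧ t ⊆ V) (hB : ∃ t, Mo χ false t ∧ t ⊆ V) :
    ∃ (c : Bool) (v a b x y : α), v ∈ V ∧ a ∈ V ∧ b ∈ V ∧ x ∈ V ∧ y ∈ V ∧
      v ≠ a ∧ v ≠ b ∧ v ≠ x ∧ v ≠ y ∧ a ≠ b ∧ a ≠ x ∧ a ≠ y ∧ b ≠ x ∧ b ≠ y ∧ x ≠ y ∧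
      χ v a = c ∧ χ v b = c ∧ χ a b = c ∧ χ v x = !c ∧ χ v y = !c ∧ χ x y = !c := by
  obtain ⟨tR, hmR, hRV⟩ := hR
  obtain ⟨tB, hmB, hBV⟩ := hB
  by_cases hshare : ∃ w, w ∈ tR ∧ w ∈ tB
  · obtain ⟨w, hwR, hwB⟩ := hshare
    obtain ⟨a, b, hab, hwa, hwb, htR⟩ := mono_extract hmR hwR
    obtain ⟨x, y, hxy, hwx, hwy, htB⟩ := mono_extract hmB hwB
    have haR : a ∈ tR := by rw [htR]; simp
    have hbR : b ∈ tR := by rw [htR]; simp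
    have hxB : x ∈ tB := by rw [htB]; simp
    have hyB : y ∈ tB := by rw [htB]; simp
    have hdisRB : ∀ p, p ∈ tR → p ≠ w → p ∉ tB := by
      intro p hp hpw hpB
      have h1 : χ w p = true := mono_edge hmR hwR hp (Ne.symm hpw)
      have h2 : χ w p = false := mono_edge hmB hwB hpB (Ne.symm hpw)
      simp [h1] at h2
    refine ⟨true, w, a, b, x, y, hRV hwR, hRV haR, hRV hbR, hBV hxB, hBV hyB,
      hwa, hwb, hwx, hwy, hab, ?_, ?_, ?_, ?_, ?_, ?_, ?_, ?_, ?_, ?_, ?_⟩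
    · exact fun h => hdisRB a haR (Ne.symm hwa) (h ▸ hxB)
    · exact fun h => hdisRB a haR (Ne.symm hwa) (h ▸ hyB)
    · exact fun h => hdisRB b hbR (Ne.symm hwb) (h ▸ hxB)
    · exact fun h => hdisRB b hbR (Ne.symm hwb) (h ▸ hyB)
    · exact hxy
    · exact mono_edge hmR hwR haR hwa
    · exact mono_edge hmR hwR hbR hwb
    · exact mono_edge hmR haR hbR hab
    · simpa using mono_edge hmB hwB hxB hwx
    · simpa using mono_edge hmB hwB hyB hwy
    · simpa using mono_edge hmB hxB hyB hxy
  · push_neg at hshare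
    obtain ⟨r0, r1, r2, hr01, hr02, hr12, hrt⟩ := Finset.card_eq_three.mp hmR.1
    obtain ⟨b0, b1, b2, hb01, hb02, hb12, hbt⟩ := Finset.card_eq_three.mp hmB.1
    let r : Fin 3 → α := ![r0, r1, r2]
    let bb : Fin 3 → α := ![b0, b1, b2]
    have hrmem : ∀ i, r i ∈ tR := by
      intro i; fin_cases i <;> simp [r, hrt]
    have hbmem : ∀ j, bb j ∈ tB := by
      intro j; fin_cases j <;> simp [bb, hbt]
    have hrinj : ∀ i i' : Fin 3, i ≠ i' → r i ≠ r i' := by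
      intro i i' h
      fin_cases i <;> fin_cases i' <;> simp only [r, Matrix.cons_val_zero, Matrix.cons_val_one, Matrix.head_cons, Matrix.cons_val_two, Matrix.tail_cons] <;> first | exact absurd rfl h | exact hr01 | exact hr02 | exact hr12 | exact Ne.symm hr01 | exact Ne.symm hr02 | exact Ne.symm hr12
    have hbinj : ∀ j j' : Fin 3, j ≠ j' → bb j ≠ bb j' := by
      intro j j' h
      fin_cases j <;> fin_cases j' <;> simp only [bb, Matrix.cons_val_zero, Matrix.cons_val_one, Matrix.head_cons, Matrix.cons_val_two, Matrix.tail_cons] <;> first | exact absurd rfl h | exact hb01 | exact hb02 | exact hb12 | exact Ne.symm hb01 | exact Ne.symm hb02 | exact Ne.symm hb12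
    have hrb : ∀ i j, r i ≠ bb j := by
      intro i j h
      exact hshare (r i) (hrmem i) (h ▸ hbmem j)
    rcases nine (fun i j => χ (r i) (bb j)) with ⟨i, j1, j2, hj, h1, h2⟩ | ⟨j, i1, i2, hi, h1, h2⟩
    · -- blue triangle {r i, bb j1, bb j2}, red triangle tR at v = r i
      obtain ⟨a, b, hab, hwa, hwb, htR⟩ := mono_extract hmR (hrmem i)
      have haR : a ∈ tR := by rw [htR]; simp
      have hbR : b ∈ tR := by rw [htR]; simp
      refine ⟨true, r i, a, b, bb j1, bb j2, hRV (hrmem i), hRV haR, hRV hbR,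
        hBV (hbmem j1), hBV (hbmem j2),
        hwa, hwb, hrb i j1, hrb i j2, hab,
        fun h => hshare a haR (h ▸ hbmem j1), fun h => hshare a haR (h ▸ hbmem j2),
        fun h => hshare b hbR (h ▸ hbmem j1), fun h => hshare b hbR (h ▸ hbmem j2),
        hbinj j1 j2 hj,
        mono_edge hmR (hrmem i) haR hwa, mono_edge hmR (hrmem i) hbR hwb,
        mono_edge hmR haR hbR hab, by simpa using h1, by simpa using h2,
        by simpa using mono_edge hmB (hbmem j1) (hbmem j2) (hbinj j1 j2 hj)⟩
    · -- red triangle {bb j, r i1, r i2}, blue triangle tB at v = bb j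
      obtain ⟨x, y, hxy, hwx, hwy, htB⟩ := mono_extract hmB (hbmem j)
      have hxB : x ∈ tB := by rw [htB]; simp
      have hyB : y ∈ tB := by rw [htB]; simp
      refine ⟨true, bb j, r i1, r i2, x, y, hBV (hbmem j), hRV (hrmem i1), hRV (hrmem i2),
        hBV hxB, hBV hyB,
        Ne.symm (hrb i1 j), Ne.symm (hrb i2 j), hwx, hwy, hrinj i1 i2 hi,
        fun h => hshare (r i1) (hrmem i1) (h ▸ hxB),
        fun h => hshare (r i1) (hrmem i1) (h ▸ hyB),
        fun h => hshare (r i2) (hrmem i2) (h ▸ hxB),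
        fun h => hshare (r i2) (hrmem i2) (h ▸ hyB),
        hxy,
        by rw [hs]; exact h1, by rw [hs]; exact h2,
        mono_edge hmR (hrmem i1) (hrmem i2) (hrinj i1 i2 hi),
        by simpa using mono_edge hmB (hbmem j) hxB hwx,
        by simpa using mono_edge hmB (hbmem j) hyB hwy,
        by simpa using mono_edge hmB hxB hyB hxy⟩



lemma tri_subset {x y z : α} {Q : Finset α} (hx : x ∈ Q) (hy : y ∈ Q) (hz : z ∈ Q) :
    ({x, y, z} : Finset α) ⊆ Q := by
  intro u hu
  simp only [Finset.mem_insert, Finset.mem_singleton] at hu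
  rcases hu with rfl | rfl | rfl <;> assumption

lemma edge3 (hs : ∀ a b, χ a b = χ b a) {Q : Finset α}
    (hQno : ∀ c t, t ⊆ Q → ¬ Mo χ c t) {x y z : α}
    (hx : x ∈ Q) (hy : y ∈ Q) (hz : z ∈ Q)
    (hxy : x ≠ y) (hxz : x ≠ z) (hyz : y ≠ z) (c : Bool) :
    χ x y = c ∨ χ x z = c ∨ χ y z = c := by
  by_contra h
  push_neg at h
  obtain ⟨h1, h2, h3⟩ := h
  exact hQno (!c) {x, y, z} (tri_subset hx hy hz)
    (mk_mono hs hxy hxz hyz (bool_resolve h1) (bool_resolve h2) (bool_resolve h3))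

lemma no3 (hs : ∀ a b, χ a b = χ b a) {Q : Finset α}
    (hQno : ∀ c t, t ⊆ Q → ¬ Mo χ c t) {a x y z : α}
    (ha : a ∈ Q) (hx : x ∈ Q) (hy : y ∈ Q) (hz : z ∈ Q)
    (hax : a ≠ x) (hay : a ≠ y) (haz : a ≠ z)
    (hxy : x ≠ y) (hxz : x ≠ z) (hyz : y ≠ z) {c : Bool}
    (h1 : χ a x = c) (h2 : χ a y = c) (h3 : χ a z = c) : False := by
  rcases edge3 hs hQno hx hy hz hxy hxz hyz c with h | h | h
  · exact hQno c {a, x, y} (tri_subset ha hx hy) (mk_mono hs hax hay hxy h1 h2 h)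
  · exact hQno c {a, x, z} (tri_subset ha hx hz) (mk_mono hs hax haz hxz h1 h3 h)
  · exact hQno c {a, y, z} (tri_subset ha hy hz) (mk_mono hs hay haz hyz h2 h3 h)

/-- a 3-element subset of a set of card ≤ 2 is impossible -/
lemma card3_le {S : Finset α} (hS : S.card ≤ 2) {a b x : α}
    (ha : a ∈ S) (hb : b ∈ S) (hx : x ∈ S) (hab : a ≠ b) (hxa : x ≠ a) (hxb : x ≠ b) :
    False := by
  have hsub : ({a, b, x} : Finset α) ⊆ S := tri_subset ha hb hx
  have h3 : ({a, b, x} : Finset α).card = 3 := by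
    rw [Finset.card_eq_three]; exact ⟨a, b, x, hab, hxa.symm, hxb.symm, rfl⟩
  have := Finset.card_le_card hsub
  omega

/-- two disjoint `c`-coloured edges in `Q \ {u}` -/
lemma tde (hs : ∀ a b, χ a b = χ b a) {Q : Finset α} (hQ5 : Q.card = 5)
    (hQno : ∀ c t, t ⊆ Q → ¬ Mo χ c t) (c : Bool) {u : α} (hu : u ∈ Q) :
    ∃ p p' q q', p ∈ Q ∧ p' ∈ Q ∧ q ∈ Q ∧ q' ∈ Q ∧
      p ≠ u ∧ p' ≠ u ∧ q ≠ u ∧ q' ≠ u ∧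
      p ≠ p' ∧ p ≠ q ∧ p ≠ q' ∧ p' ≠ q ∧ p' ≠ q' ∧ q ≠ q' ∧
      χ p p' = c ∧ χ q q' = c := by
  have hE : (Q.erase u).card = 4 := by rw [Finset.card_erase_of_mem hu, hQ5]
  obtain ⟨S, hSE, hS3⟩ := Finset.exists_subset_card_eq (s := Q.erase u) (n := 3) (by omega)
  obtain ⟨x, y, z, hxy, hxz, hyz, rfl⟩ := Finset.card_eq_three.mp hS3
  have hwcard : ((Q.erase u) \ {x, y, z}).card = 1 := by
    rw [Finset.card_sdiff_of_subset hSE, hE, hS3]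
  obtain ⟨w, hw⟩ := Finset.card_eq_one.mp hwcard
  have hwmem : w ∈ (Q.erase u) \ ({x, y, z} : Finset α) := by
    rw [hw]; exact Finset.mem_singleton_self w
  have hwE : w ∈ Q.erase u := (Finset.mem_sdiff.mp hwmem).1
  have hwxyz := (Finset.mem_sdiff.mp hwmem).2
  simp only [Finset.mem_insert, Finset.mem_singleton, not_or] at hwxyz
  obtain ⟨hwx, hwy, hwz⟩ := hwxyz
  have hmem : ∀ a ∈ Q.erase u, a ∈ Q ∧ a ≠ u := by
    intro a ha; exact ⟨Finset.mem_of_mem_erase ha, Finset.ne_of_mem_erase ha⟩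
  have hxQ := hmem x (hSE (by simp)); have hyQ := hmem y (hSE (by simp))
  have hzQ := hmem z (hSE (by simp)); have hwQ := hmem w hwE
  -- inner continuation
  have inner : ∀ p p' z w : α, p ∈ Q → p' ∈ Q → z ∈ Q → w ∈ Q →
      p ≠ u → p' ≠ u → z ≠ u → w ≠ u →
      p ≠ p' → p ≠ z → p ≠ w → p' ≠ z → p' ≠ w → z ≠ w →
      χ p p' = c →
      ∃ p p' q q', p ∈ Q ∧ p' ∈ Q ∧ q ∈ Q ∧ q' ∈ Q ∧
        p ≠ u ∧ p' ≠ u ∧ q ≠ u ∧ q' ≠ u ∧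
        p ≠ p' ∧ p ≠ q ∧ p ≠ q' ∧ p' ≠ q ∧ p' ≠ q' ∧ q ≠ q' ∧
        χ p p' = c ∧ χ q q' = c := by
    intro p p' z w hpQ hp'Q hzQ hwQ hpu hp'u hzu hwu hpp' hpz hpw hp'z hp'w hzw hcpp'
    by_cases hzwc : χ z w = c
    · exact ⟨p, p', z, w, hpQ, hp'Q, hzQ, hwQ, hpu, hp'u, hzu, hwu,
        hpp', hpz, hpw, hp'z, hp'w, hzw, hcpp', hzwc⟩
    have hzw' : χ z w = !c := bool_resolve hzwc
    by_cases hpz' : χ p z = c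
    · by_cases hp'w' : χ p' w = c
      · exact ⟨p, z, p', w, hpQ, hzQ, hp'Q, hwQ, hpu, hzu, hp'u, hwu,
          hpz, hpp', hpw, hp'z.symm, hzw, hp'w, hpz', hp'w'⟩
      · -- χ p' w = !c : then χ p' z = c (else mono !c triangle p' z w in Q)
        have hp'w2 : χ p' w = !c := bool_resolve hp'w'
        have hp'z' : χ p' z = c := by
          by_contra h
          exact hQno (!c) {p', z, w} (tri_subset hp'Q hzQ hwQ)
            (mk_mono hs hp'z hp'w hzw (bool_resolve h) hp'w2 hzw')
        -- then p, p' both c-adjacent to z and χ p p' = c : mono c triangle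
        exact absurd (mk_mono hs hpp' hpz hp'z hcpp' hpz' hp'z')
          (hQno c {p, p', z} (tri_subset hpQ hp'Q hzQ))
    · -- χ p z = !c ⇒ χ p w = c (else mono !c triangle p z w)
      have hpz2 : χ p z = !c := bool_resolve hpz'
      have hpw' : χ p w = c := by
        by_contra h
        exact hQno (!c) {p, z, w} (tri_subset hpQ hzQ hwQ)
          (mk_mono hs hpz hpw hzw hpz2 (bool_resolve h) hzw')
      by_cases hp'z' : χ p' z = c
      · exact ⟨p, w, p', z, hpQ, hwQ, hp'Q, hzQ, hpu, hwu, hp'u, hzu,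
          hpw, hpp', hpz, hp'w.symm, hzw.symm, hp'z, hpw', hp'z'⟩
      · have hp'z2 : χ p' z = !c := bool_resolve hp'z'
        have hp'w' : χ p' w = c := by
          by_contra h
          exact hQno (!c) {p', z, w} (tri_subset hp'Q hzQ hwQ)
            (mk_mono hs hp'z hp'w hzw hp'z2 (bool_resolve h) hzw')
        exact absurd (mk_mono hs hpp' hpw hp'w hcpp' hpw' hp'w')
          (hQno c {p, p', w} (tri_subset hpQ hp'Q hwQ))
  rcases edge3 hs hQno hxQ.1 hyQ.1 hzQ.1 hxy hxz hyz c with h | h | h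
  · exact inner x y z w hxQ.1 hyQ.1 hzQ.1 hwQ.1 hxQ.2 hyQ.2 hzQ.2 hwQ.2
      hxy hxz (Ne.symm hwx) hyz (Ne.symm hwy) (Ne.symm hwz) h
  · exact inner x z y w hxQ.1 hzQ.1 hyQ.1 hwQ.1 hxQ.2 hzQ.2 hyQ.2 hwQ.2
      hxz hxy (Ne.symm hwx) hyz.symm (Ne.symm hwz) (Ne.symm hwy) h
  · exact inner y z x w hyQ.1 hzQ.1 hxQ.1 hwQ.1 hyQ.2 hzQ.2 hxQ.2 hwQ.2
      hyz hxy.symm (Ne.symm hwy) hxz.symm (Ne.symm hwz) (Ne.symm hwx) h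



lemma pairIn (hs : ∀ a b, χ a b = χ b a) {Q : Finset α}
    (hQno : ∀ c t, t ⊆ Q → ¬ Mo χ c t) (c : Bool) {S : Finset α}
    (hSQ : S ⊆ Q) (hS3 : 3 ≤ S.card) :
    ∃ p q, p ∈ S ∧ q ∈ S ∧ p ≠ q ∧ χ p q = c := by
  obtain ⟨x, y, z, hx, hy, hz, hxy, hxz, hyz⟩ := three_elems hS3
  rcases edge3 hs hQno (hSQ hx) (hSQ hy) (hSQ hz) hxy hxz hyz c with h | h | h
  · exact ⟨x, y, hx, hy, hxy, h⟩
  · exact ⟨x, z, hx, hz, hxz, h⟩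
  · exact ⟨y, z, hy, hz, hyz, h⟩

lemma B_le_two (hs : ∀ a b, χ a b = χ b a) {Q : Finset α}
    (hQno : ∀ c t, t ⊆ Q → ¬ Mo χ c t) {d : Bool} {s : α}
    (noT : ∀ p ∈ Q, ∀ q ∈ Q, p ≠ q → χ s p = !d → χ s q = !d → χ p q ≠ !d) :
    (Q.filter fun q => χ s q = !d).card ≤ 2 := by
  by_contra hc
  push_neg at hc
  obtain ⟨p, q, hp, hq, hpq, hcol⟩ := pairIn hs hQno (!d)
    (Finset.filter_subset _ _) hc
  simp only [Finset.mem_filter] at hp hq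
  exact noT p hp.1 q hq.1 hpq hp.2 hq.2 hcol

lemma killSmall (hs : ∀ a b, χ a b = χ b a) {Q : Finset α} {d : Bool} {s1 s2 : α}
    (hQ5 : Q.card = 5)
    (hQno : ∀ c t, t ⊆ Q → ¬ Mo χ c t)
    (noT2 : ∀ p ∈ Q, ∀ q ∈ Q, p ≠ q → χ s2 p = !d → χ s2 q = !d → χ p q ≠ !d)
    (West : ∀ p1 q1 p2 q2 : α, p1 ∈ Q → q1 ∈ Q → p2 ∈ Q → q2 ∈ Q →
      p1 ≠ q1 → p2 ≠ q2 → p1 ≠ p2 → p1 ≠ q2 → q1 ≠ p2 → q1 ≠ q2 →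
      χ s1 p1 = d → χ s1 q1 = d → χ s2 p2 = d → χ s2 q2 = d →
      χ p1 q1 = d → χ p2 q2 = d → False)
    (hsmall : (Q.filter fun q => χ s1 q = !d).card ≤ 1) : False := by
  have hB2le := B_le_two hs hQno noT2
  rcases Nat.le_one_iff_eq_zero_or_eq_one.mp hsmall with h0 | h1
  · -- s1 is d-adjacent to all of Q
    have hall1 : ∀ q ∈ Q, χ s1 q = d := by
      intro q hq
      by_contra h
      have hmem : q ∈ Q.filter fun q => χ s1 q = !d :=
        Finset.mem_filter.mpr ⟨hq, bool_resolve h⟩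
      rw [Finset.card_eq_zero.mp h0] at hmem
      exact absurd hmem (Finset.notMem_empty q)
    -- d-edge inside R2
    have hR2 : 3 ≤ (Q.filter fun q => χ s2 q = d).card := by
      have hsum := Finset.card_filter_add_card_filter_not
        (s := Q) (p := fun q => χ s2 q = !d)
      have he : (Q.filter fun q => ¬ χ s2 q = !d) = Q.filter fun q => χ s2 q = d := by
        apply Finset.filter_congr
        intro q _
        constructor
        · exact fun h => bool_resolve' h
        · intro h hq; rw [h] at hq; cases d <;> exact absurd hq (by decide)
      rw [he] at hsum
      omega
    obtain ⟨p2, q2, hp2, hq2, hp2q2, hcol2⟩ := pairIn hs hQno d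
      (Finset.filter_subset _ _) hR2
    simp only [Finset.mem_filter] at hp2 hq2
    have hsub : Q \ {p2, q2} ⊆ Q := Finset.sdiff_subset
    have hcard : 3 ≤ (Q \ ({p2, q2} : Finset α)).card := by
      have h2 : ({p2, q2} : Finset α).card = 2 := Finset.card_pair hp2q2
      have hss : ({p2, q2} : Finset α) ⊆ Q := by
        intro u hu; simp only [Finset.mem_insert, Finset.mem_singleton] at hu
        rcases hu with rfl | rfl; exacts [hp2.1, hq2.1]
      rw [Finset.card_sdiff_of_subset hss, h2, hQ5]
    obtain ⟨p1, q1, hp1, hq1, hp1q1, hcol1⟩ := pairIn hs hQno d hsub hcard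
    have hp1' := Finset.mem_sdiff.mp hp1
    have hq1' := Finset.mem_sdiff.mp hq1
    simp only [Finset.mem_insert, Finset.mem_singleton, not_or] at hp1' hq1'
    exact West p1 q1 p2 q2 hp1'.1 hq1'.1 hp2.1 hq2.1 hp1q1 hp2q2
      hp1'.2.1 hp1'.2.2 hq1'.2.1 hq1'.2.2
      (hall1 p1 hp1'.1) (hall1 q1 hq1'.1) hp2.2 hq2.2 hcol1 hcol2
  · -- B1 = {u}
    obtain ⟨u, hu⟩ := Finset.card_eq_one.mp h1
    have huB : u ∈ Q.filter fun q => χ s1 q = !d := by rw [hu]; exact Finset.mem_singleton_self u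
    have huQ : u ∈ Q := (Finset.mem_filter.mp huB).1
    have hall : ∀ q ∈ Q, q ≠ u → χ s1 q = d := by
      intro q hq hqu
      by_contra h
      have hmem : q ∈ Q.filter fun q => χ s1 q = !d :=
        Finset.mem_filter.mpr ⟨hq, bool_resolve h⟩
      rw [hu, Finset.mem_singleton] at hmem
      exact hqu hmem
    obtain ⟨p, p', q, q', hpQ, hp'Q, hqQ, hq'Q, hpu, hp'u, hqu, hq'u,
      hpp', hpq, hpq', hp'q, hp'q', hqq', hcpp', hcqq'⟩ := tde hs hQ5 hQno d huQ
    by_cases hf : χ s2 p = d ∧ χ s2 p' = d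
    · exact West q q' p p' hqQ hq'Q hpQ hp'Q hqq' hpp'
        (Ne.symm hpq) (Ne.symm hp'q) (Ne.symm hpq') (Ne.symm hp'q')
        (hall q hqQ hqu) (hall q' hq'Q hq'u) hf.1 hf.2 hcqq' hcpp'
    by_cases hf' : χ s2 q = d ∧ χ s2 q' = d
    · exact West p p' q q' hpQ hp'Q hqQ hq'Q hpp' hqq' hpq hpq' hp'q hp'q'
        (hall p hpQ hpu) (hall p' hp'Q hp'u) hf'.1 hf'.2 hcpp' hcqq'
    have hP : χ s2 p = !d ∨ χ s2 p' = !d := by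
      rcases not_and_or.mp hf with h | h
      · exact Or.inl (bool_resolve h)
      · exact Or.inr (bool_resolve h)
    have hQ' : χ s2 q = !d ∨ χ s2 q' = !d := by
      rcases not_and_or.mp hf' with h | h
      · exact Or.inl (bool_resolve h)
      · exact Or.inr (bool_resolve h)
    -- continuation
    have cont : ∀ P P' R R' : α, P ∈ Q → P' ∈ Q → R ∈ Q → R' ∈ Q →
        P ≠ u → P' ≠ u → R ≠ u → R' ≠ u →
        P ≠ P' → P ≠ R → P ≠ R' → P' ≠ R → P' ≠ R' → R ≠ R' →
        χ P P' = d → χ R R' = d → χ s2 P = !d → χ s2 R = !d → False := by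
      intro P P' R R' hPQ hP'Q hRQ hR'Q hPu hP'u hRu hR'u
        hPP' hPR hPR' hP'R hP'R' hRR' hcP hcR hs2P hs2R
      have hs2x : ∀ x ∈ Q, x ≠ P → x ≠ R → χ s2 x = d := by
        intro x hx hxP hxR
        by_contra h
        exact card3_le hB2le (Finset.mem_filter.mpr ⟨hPQ, hs2P⟩)
          (Finset.mem_filter.mpr ⟨hRQ, hs2R⟩)
          (Finset.mem_filter.mpr ⟨hx, bool_resolve h⟩) hPR hxP hxR
      have hPRd : χ P R = d := bool_resolve' (noT2 P hPQ R hRQ hPR hs2P hs2R)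
      have hs2P' : χ s2 P' = d := hs2x P' hP'Q (Ne.symm hPP') hP'R
      have hs2R' : χ s2 R' = d := hs2x R' hR'Q (Ne.symm hPR') (Ne.symm hRR')
      have hs2u : χ s2 u = d := hs2x u huQ (Ne.symm hPu) (Ne.symm hRu)
      by_cases hP'R'd : χ P' R' = d
      · exact West P R P' R' hPQ hRQ hP'Q hR'Q hPR hP'R' hPP' hPR' (Ne.symm hP'R) hRR'
          (hall P hPQ hPu) (hall R hRQ hRu) hs2P' hs2R' hPRd hP'R'd
      · have hP'R'n : χ P' R' = !d := bool_resolve hP'R'd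
        have hPR'n : χ P R' = !d := by
          by_contra h
          exact no3 hs hQno hPQ hP'Q hRQ hR'Q hPP' hPR hPR' hP'R hP'R' hRR'
            hcP hPRd (bool_resolve' h)
        have hRP'n : χ R P' = !d := by
          by_contra h
          exact no3 hs hQno hRQ hR'Q hPQ hP'Q hRR' (Ne.symm hPR) (Ne.symm hP'R)
            (Ne.symm hPR') (Ne.symm hP'R') hPP' hcR ((hs R P).trans hPRd) (bool_resolve' h)
        have hP'ud : χ P' u = d := by
          by_contra h
          exact no3 hs hQno hP'Q hRQ hR'Q huQ hP'R hP'R' hP'u hRR' hRu hR'u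
            ((hs P' R).trans hRP'n) hP'R'n (bool_resolve h)
        have hR'ud : χ R' u = d := by
          by_contra h
          exact no3 hs hQno hR'Q hPQ hP'Q huQ (Ne.symm hPR') (Ne.symm hP'R') hR'u
            hPP' hPu hP'u ((hs R' P).trans hPR'n) ((hs R' P').trans hP'R'n) (bool_resolve h)
        exact West R R' P' u hRQ hR'Q hP'Q huQ hRR' hP'u (Ne.symm hP'R) hRu
          (Ne.symm hP'R') hR'u (hall R hRQ hRu) (hall R' hR'Q hR'u) hs2P' hs2u hcR hP'ud
    rcases hP with hp1 | hp1 <;> rcases hQ' with hq1 | hq1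
    · exact cont p p' q q' hpQ hp'Q hqQ hq'Q hpu hp'u hqu hq'u hpp' hpq hpq' hp'q hp'q' hqq'
        hcpp' hcqq' hp1 hq1
    · exact cont p p' q' q hpQ hp'Q hq'Q hqQ hpu hp'u hq'u hqu hpp' hpq' hpq hp'q' hp'q
        (Ne.symm hqq') hcpp' ((hs q' q).trans hcqq') hp1 hq1
    · exact cont p' p q q' hp'Q hpQ hqQ hq'Q hp'u hpu hqu hq'u (Ne.symm hpp') hp'q hp'q'
        hpq hpq' hqq' ((hs p' p).trans hcpp') hcqq' hp1 hq1
    · exact cont p' p q' q hp'Q hpQ hq'Q hqQ hp'u hpu hq'u hqu (Ne.symm hpp') hp'q' hp'q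
        hpq' hpq (Ne.symm hqq') ((hs p' p).trans hcpp') ((hs q' q).trans hcqq') hp1 hq1



lemma coreSide (hs : ∀ a b, χ a b = χ b a) {V Q : Finset α} {d : Bool} {v s1 s2 w1 w2 : α}
    (hQV : Q ⊆ V) (hQ5 : Q.card = 5)
    (hQno : ∀ c t, t ⊆ Q → ¬ Mo χ c t)
    (Hdis : ∀ c t1 t2, Mo χ c t1 → Mo χ c t2 → t1 ⊆ V → t2 ⊆ V → ¬ Disjoint t1 t2)
    (hvV : v ∈ V) (h1V : s1 ∈ V) (h2V : s2 ∈ V) (hw1V : w1 ∈ V) (hw2V : w2 ∈ V)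
    (hvQ : v ∉ Q) (h1Q : s1 ∉ Q) (h2Q : s2 ∉ Q) (hw1Q : w1 ∉ Q) (hw2Q : w2 ∉ Q)
    (hv1 : v ≠ s1) (hv2 : v ≠ s2) (hvw1 : v ≠ w1) (hvw2 : v ≠ w2)
    (h12 : s1 ≠ s2) (h1w1 : s1 ≠ w1) (h1w2 : s1 ≠ w2) (h2w1 : s2 ≠ w1) (h2w2 : s2 ≠ w2)
    (hw12 : w1 ≠ w2)
    (c1 : χ v s1 = d) (c2 : χ v s2 = d) (c12 : χ s1 s2 = d)
    (e1 : χ v w1 = !d) (e2 : χ v w2 = !d) (e12 : χ w1 w2 = !d) :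
    ∀ p ∈ Q, ∀ q ∈ Q, p ≠ q → χ v p = d → χ v q = d → χ p q ≠ d := by
  have tri_w : Mo χ (!d) {v, w1, w2} := mk_mono hs hvw1 hvw2 hw12 e1 e2 e12
  have sub_w : ({v, w1, w2} : Finset α) ⊆ V := tri_subset hvV hw1V hw2V
  -- s₁, s₂ have no (!d)-triangle into Q
  have noT : ∀ s, s ∈ V → s ∉ Q → s ≠ v → s ≠ w1 → s ≠ w2 →
      ∀ p ∈ Q, ∀ q ∈ Q, p ≠ q → χ s p = !d → χ s q = !d → χ p q ≠ !d := by
    intro s hsV hsQ hsv hsw1 hsw2 p hp q hq hpq hsp hsq hpqc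
    have hsp' : s ≠ p := fun h => hsQ (h ▸ hp)
    have hsq' : s ≠ q := fun h => hsQ (h ▸ hq)
    refine Hdis (!d) {s, p, q} {v, w1, w2} (mk_mono hs hsp' hsq' hpq hsp hsq hpqc) tri_w
      (tri_subset hsV (hQV hp) (hQV hq)) sub_w ?_
    rw [Finset.disjoint_left]
    intro a ha hb
    simp only [Finset.mem_insert, Finset.mem_singleton] at ha hb
    rcases ha with rfl | rfl | rfl
    · rcases hb with rfl | rfl | rfl
      exacts [hsv rfl, hsw1 rfl, hsw2 rfl]
    · rcases hb with rfl | rfl | rfl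
      exacts [hvQ hp, hw1Q hp, hw2Q hp]
    · rcases hb with rfl | rfl | rfl
      exacts [hvQ hq, hw1Q hq, hw2Q hq]
  have noT1 := noT s1 h1V h1Q (Ne.symm hv1) h1w1 h1w2
  have noT2 := noT s2 h2V h2Q (Ne.symm hv2) h2w1 h2w2
  have West : ∀ p1 q1 p2 q2 : α, p1 ∈ Q → q1 ∈ Q → p2 ∈ Q → q2 ∈ Q →
      p1 ≠ q1 → p2 ≠ q2 → p1 ≠ p2 → p1 ≠ q2 → q1 ≠ p2 → q1 ≠ q2 →
      χ s1 p1 = d → χ s1 q1 = d → χ s2 p2 = d → χ s2 q2 = d →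
      χ p1 q1 = d → χ p2 q2 = d → False := by
    intro p1 q1 p2 q2 hp1 hq1 hp2 hq2 hne1 hne2 h13 h14 h23 h24 a1 a2 a3 a4 a5 a6
    have hne11 : s1 ≠ p1 := fun h => h1Q (h ▸ hp1)
    have hne12 : s1 ≠ q1 := fun h => h1Q (h ▸ hq1)
    have hne21 : s2 ≠ p2 := fun h => h2Q (h ▸ hp2)
    have hne22 : s2 ≠ q2 := fun h => h2Q (h ▸ hq2)
    refine Hdis d {s1, p1, q1} {s2, p2, q2}
      (mk_mono hs hne11 hne12 hne1 a1 a2 a5)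
      (mk_mono hs hne21 hne22 hne2 a3 a4 a6)
      (tri_subset h1V (hQV hp1) (hQV hq1))
      (tri_subset h2V (hQV hp2) (hQV hq2)) ?_
    rw [Finset.disjoint_left]
    intro a ha hb
    simp only [Finset.mem_insert, Finset.mem_singleton] at ha hb
    rcases ha with rfl | rfl | rfl
    · rcases hb with h | h | h
      exacts [h12 h, h1Q (h ▸ hp2), h1Q (h ▸ hq2)]
    · rcases hb with h | h | h
      exacts [h2Q (h ▸ hp1), h13 h, h14 h]
    · rcases hb with h | h | h
      exacts [h2Q (h ▸ hq1), h23 h, h24 h]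
  -- the `mid` configuration: B₁ = {x,y}, B₂ = {y,z} with shared vertex y
  have mid : ∀ x y z : α, x ∈ Q → y ∈ Q → z ∈ Q → x ≠ y → y ≠ z → x ≠ z →
      χ s1 x = !d → χ s1 y = !d → χ s2 y = !d → χ s2 z = !d →
      (∀ t ∈ Q, t ≠ x → t ≠ y → χ s1 t = d) →
      (∀ t ∈ Q, t ≠ y → t ≠ z → χ s2 t = d) → False := by
    intro x y z hxQ hyQ hzQ hxy hyz hxz hs1x hs1y hs2y hs2z hS1 hS2
    have hxyd : χ x y = d := bool_resolve' (noT1 x hxQ y hyQ hxy hs1x hs1y)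
    have hyzd : χ y z = d := bool_resolve' (noT2 y hyQ z hzQ hyz hs2y hs2z)
    have hxzd : χ x z = !d := by
      by_contra h
      exact hQno d {x, y, z} (tri_subset hxQ hyQ hzQ)
        (mk_mono hs hxy hxz hyz hxyd (bool_resolve' h) hyzd)
    have hcard2 : ((Q \ {x, y, z}).card) = 2 := by
      rw [Finset.card_sdiff_of_subset (tri_subset hxQ hyQ hzQ)]
      have h3 : ({x, y, z} : Finset α).card = 3 := by
        rw [Finset.card_eq_three]; exact ⟨x, y, z, hxy, hxz, hyz, rfl⟩
      omega
    obtain ⟨d0, e0, hd0e0, hdeq⟩ := Finset.card_eq_two.mp hcard2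
    have hd0m : d0 ∈ Q \ ({x, y, z} : Finset α) := by rw [hdeq]; simp
    have he0m : e0 ∈ Q \ ({x, y, z} : Finset α) := by rw [hdeq]; simp
    simp only [Finset.mem_sdiff, Finset.mem_insert, Finset.mem_singleton, not_or] at hd0m he0m
    obtain ⟨hd0Q, hd0x, hd0y, hd0z⟩ := hd0m
    obtain ⟨he0Q, he0x, he0y, he0z⟩ := he0m
    have hx1 : χ x d0 = d ∨ χ x e0 = d := by
      by_contra hcc
      push_neg at hcc
      exact no3 hs hQno hxQ hzQ hd0Q he0Q hxz (Ne.symm hd0x) (Ne.symm he0x)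
        (Ne.symm hd0z) (Ne.symm he0z) hd0e0 hxzd (bool_resolve hcc.1) (bool_resolve hcc.2)
    have hz1 : χ z d0 = d ∨ χ z e0 = d := by
      by_contra hcc
      push_neg at hcc
      exact no3 hs hQno hzQ hxQ hd0Q he0Q (Ne.symm hxz) (Ne.symm hd0z) (Ne.symm he0z)
        (Ne.symm hd0x) (Ne.symm he0x) hd0e0 ((hs z x).trans hxzd)
        (bool_resolve hcc.1) (bool_resolve hcc.2)
    have WA : χ z d0 = d → χ x e0 = d → False := by
      intro u1 u2
      exact West z d0 x e0 hzQ hd0Q hxQ he0Q (Ne.symm hd0z) (Ne.symm he0x)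
        (Ne.symm hxz) (Ne.symm he0z) hd0x hd0e0
        (hS1 z hzQ (Ne.symm hxz) (Ne.symm hyz)) (hS1 d0 hd0Q hd0x hd0y)
        (hS2 x hxQ hxy hxz) (hS2 e0 he0Q he0y he0z) u1 u2
    have WB : χ z e0 = d → χ x d0 = d → False := by
      intro u1 u2
      exact West z e0 x d0 hzQ he0Q hxQ hd0Q (Ne.symm he0z) (Ne.symm hd0x)
        (Ne.symm hxz) (Ne.symm hd0z) he0x (Ne.symm hd0e0)
        (hS1 z hzQ (Ne.symm hxz) (Ne.symm hyz)) (hS1 e0 he0Q he0x he0y)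
        (hS2 x hxQ hxy hxz) (hS2 d0 hd0Q hd0y hd0z) u1 u2
    rcases hx1 with hxd | hxe <;> rcases hz1 with hzd | hze
    · by_cases hxe0 : χ x e0 = d
      · exact WA hzd hxe0
      · by_cases hze0 : χ z e0 = d
        · exact WB hze0 hxd
        · exact hQno (!d) {x, z, e0} (tri_subset hxQ hzQ he0Q)
            (mk_mono hs hxz (Ne.symm he0x) (Ne.symm he0z) hxzd
              (bool_resolve hxe0) (bool_resolve hze0))
    · exact WB hze hxd
    · exact WA hzd hxe
    · by_cases hxd0 : χ x d0 = d
      · exact WB hze hxd0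
      · by_cases hzd0 : χ z d0 = d
        · exact WA hzd0 hxe
        · exact hQno (!d) {x, z, d0} (tri_subset hxQ hzQ hd0Q)
            (mk_mono hs hxz (Ne.symm hd0x) (Ne.symm hd0z) hxzd
              (bool_resolve hxd0) (bool_resolve hzd0))
  -- small cases killed
  by_cases h1small : (Q.filter fun q => χ s1 q = !d).card ≤ 1
  · exact (killSmall hs hQ5 hQno noT2 West h1small).elim
  by_cases h2small : (Q.filter fun q => χ s2 q = !d).card ≤ 1
  · have West' : ∀ p1 q1 p2 q2 : α, p1 ∈ Q → q1 ∈ Q → p2 ∈ Q → q2 ∈ Q →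
        p1 ≠ q1 → p2 ≠ q2 → p1 ≠ p2 → p1 ≠ q2 → q1 ≠ p2 → q1 ≠ q2 →
        χ s2 p1 = d → χ s2 q1 = d → χ s1 p2 = d → χ s1 q2 = d →
        χ p1 q1 = d → χ p2 q2 = d → False := by
      intro p1 q1 p2 q2 m1 m2 m3 m4 n1 n2 n3 n4 n5 n6 a1 a2 a3 a4 a5 a6
      exact West p2 q2 p1 q1 m3 m4 m1 m2 n2 n1 (Ne.symm n3) (Ne.symm n5)
        (Ne.symm n4) (Ne.symm n6) a3 a4 a1 a2 a6 a5
    exact (killSmall hs hQ5 hQno noT1 West' h2small).elim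
  push_neg at h1small h2small
  have hB1le := B_le_two hs hQno noT1
  have hB2le := B_le_two hs hQno noT2
  have hB1c : (Q.filter fun q => χ s1 q = !d).card = 2 := by omega
  have hB2c : (Q.filter fun q => χ s2 q = !d).card = 2 := by omega
  obtain ⟨a, b, hab, hB1eq⟩ := Finset.card_eq_two.mp hB1c
  have haB1 : a ∈ Q.filter fun q => χ s1 q = !d := by rw [hB1eq]; simp
  have hbB1 : b ∈ Q.filter fun q => χ s1 q = !d := by rw [hB1eq]; simp
  have haQ : a ∈ Q := (Finset.mem_filter.mp haB1).1
  have hbQ : b ∈ Q := (Finset.mem_filter.mp hbB1).1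
  have ha1 : χ s1 a = !d := (Finset.mem_filter.mp haB1).2
  have hb1 : χ s1 b = !d := (Finset.mem_filter.mp hbB1).2
  have habd : χ a b = d := bool_resolve' (noT1 a haQ b hbQ hab ha1 hb1)
  have hnotB1 : ∀ t ∈ Q, t ≠ a → t ≠ b → χ s1 t = d := by
    intro t ht hta htb
    by_contra h
    have hmem : t ∈ Q.filter fun q => χ s1 q = !d :=
      Finset.mem_filter.mpr ⟨ht, bool_resolve h⟩
    rw [hB1eq] at hmem
    simp only [Finset.mem_insert, Finset.mem_singleton] at hmem
    tauto
  obtain ⟨x2, y2, hx2y2, hB2eq⟩ := Finset.card_eq_two.mp hB2c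
  have hx2B : x2 ∈ Q.filter fun q => χ s2 q = !d := by rw [hB2eq]; simp
  have hy2B : y2 ∈ Q.filter fun q => χ s2 q = !d := by rw [hB2eq]; simp
  have hnotB2 : ∀ t ∈ Q, t ≠ x2 → t ≠ y2 → χ s2 t = d := by
    intro t ht hta htb
    by_contra h
    have hmem : t ∈ Q.filter fun q => χ s2 q = !d :=
      Finset.mem_filter.mpr ⟨ht, bool_resolve h⟩
    rw [hB2eq] at hmem
    simp only [Finset.mem_insert, Finset.mem_singleton] at hmem
    tauto
  by_cases haB2 : χ s2 a = !d <;> by_cases hbB2 : χ s2 b = !d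
  · -- B₁ = B₂ = {a, b} : the genuine final case
    have hnotB2' : ∀ t ∈ Q, t ≠ a → t ≠ b → χ s2 t = d := by
      intro t ht hta htb
      by_contra h
      exact card3_le hB2le (Finset.mem_filter.mpr ⟨haQ, haB2⟩)
        (Finset.mem_filter.mpr ⟨hbQ, hbB2⟩)
        (Finset.mem_filter.mpr ⟨ht, bool_resolve h⟩) hab hta htb
    intro p hp q hq hpq hvp hvq hpqd
    have hvp' : v ≠ p := fun h => hvQ (h ▸ hp)
    have hvq' : v ≠ q := fun h => hvQ (h ▸ hq)
    have tri2 : Mo χ d {v, p, q} := mk_mono hs hvp' hvq' hpq hvp hvq hpqd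
    have key : ∀ t, t ∈ Q → t ≠ a → t ≠ b → t = p ∨ t = q := by
      intro t ht hta htb
      have h1t : s1 ≠ t := fun h => h1Q (h ▸ ht)
      have h2t : s2 ≠ t := fun h => h2Q (h ▸ ht)
      have tri1 : Mo χ d {s1, s2, t} := mk_mono hs h12 h1t h2t c12
        (hnotB1 t ht hta htb) (hnotB2' t ht hta htb)
      have hnd := Hdis d {s1, s2, t} {v, p, q} tri1 tri2
        (tri_subset h1V h2V (hQV ht)) (tri_subset hvV (hQV hp) (hQV hq))
      rw [Finset.not_disjoint_iff] at hnd
      obtain ⟨w, hw1, hw2⟩ := hnd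
      simp only [Finset.mem_insert, Finset.mem_singleton] at hw1 hw2
      rcases hw1 with rfl | rfl | rfl
      · rcases hw2 with h | h | h
        exacts [(hv1 h.symm).elim, (h1Q (h ▸ hp)).elim, (h1Q (h ▸ hq)).elim]
      · rcases hw2 with h | h | h
        exacts [(hv2 h.symm).elim, (h2Q (h ▸ hp)).elim, (h2Q (h ▸ hq)).elim]
      · rcases hw2 with h | h | h
        exacts [(hvQ (h ▸ ht)).elim, Or.inl h, Or.inr h]
    have hpair : ({a, b} : Finset α) ⊆ Q := by
      intro u hu; simp only [Finset.mem_insert, Finset.mem_singleton] at hu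
      rcases hu with rfl | rfl; exacts [haQ, hbQ]
    have hTcard : 3 ≤ (Q \ ({a, b} : Finset α)).card := by
      rw [Finset.card_sdiff_of_subset hpair, Finset.card_pair hab, hQ5]
    obtain ⟨t1, t2, t3, ht1, ht2, ht3, h12', h13', h23'⟩ := three_elems hTcard
    simp only [Finset.mem_sdiff, Finset.mem_insert, Finset.mem_singleton, not_or]
      at ht1 ht2 ht3
    rcases key t1 ht1.1 ht1.2.1 ht1.2.2 with k1 | k1 <;>
      rcases key t2 ht2.1 ht2.2.1 ht2.2.2 with k2 | k2 <;>
      rcases key t3 ht3.1 ht3.2.1 ht3.2.2 with k3 | k3 <;>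
      first
        | exact h12' (k1.trans k2.symm)
        | exact h13' (k1.trans k3.symm)
        | exact h23' (k2.trans k3.symm)
  · -- a shared, b not in B₂
    have haB2m : a ∈ Q.filter fun q => χ s2 q = !d := Finset.mem_filter.mpr ⟨haQ, haB2⟩
    rw [hB2eq] at haB2m
    simp only [Finset.mem_insert, Finset.mem_singleton] at haB2m
    have hget : ∃ c0, c0 ∈ Q ∧ χ s2 c0 = !d ∧ c0 ≠ a ∧
        (∀ t ∈ Q, t ≠ a → t ≠ c0 → χ s2 t = d) := by
      rcases haB2m with rfl | rfl
      · exact ⟨y2, (Finset.mem_filter.mp hy2B).1, (Finset.mem_filter.mp hy2B).2,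
          Ne.symm hx2y2, fun t ht h1 h2 => hnotB2 t ht h1 h2⟩
      · exact ⟨x2, (Finset.mem_filter.mp hx2B).1, (Finset.mem_filter.mp hx2B).2,
          hx2y2, fun t ht h1 h2 => hnotB2 t ht h2 h1⟩
    obtain ⟨c0, hc0Q, hc0B, hc0a, hc0all⟩ := hget
    have hc0b : c0 ≠ b := fun h => hbB2 (h ▸ hc0B)
    exact (mid b a c0 hbQ haQ hc0Q (Ne.symm hab) (Ne.symm hc0a) (Ne.symm hc0b)
      hb1 ha1 haB2 hc0B (fun t ht u1 u2 => hnotB1 t ht u2 u1) hc0all).elim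
  · -- b shared, a not in B₂
    have hbB2m : b ∈ Q.filter fun q => χ s2 q = !d := Finset.mem_filter.mpr ⟨hbQ, hbB2⟩
    rw [hB2eq] at hbB2m
    simp only [Finset.mem_insert, Finset.mem_singleton] at hbB2m
    have hget : ∃ c0, c0 ∈ Q ∧ χ s2 c0 = !d ∧ c0 ≠ b ∧
        (∀ t ∈ Q, t ≠ b → t ≠ c0 → χ s2 t = d) := by
      rcases hbB2m with rfl | rfl
      · exact ⟨y2, (Finset.mem_filter.mp hy2B).1, (Finset.mem_filter.mp hy2B).2,
          Ne.symm hx2y2, fun t ht h1 h2 => hnotB2 t ht h1 h2⟩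
      · exact ⟨x2, (Finset.mem_filter.mp hx2B).1, (Finset.mem_filter.mp hx2B).2,
          hx2y2, fun t ht h1 h2 => hnotB2 t ht h2 h1⟩
    obtain ⟨c0, hc0Q, hc0B, hc0b, hc0all⟩ := hget
    have hc0a : c0 ≠ a := fun h => haB2 (h ▸ hc0B)
    exact (mid a b c0 haQ hbQ hc0Q hab (Ne.symm hc0b) (Ne.symm hc0a)
      ha1 hb1 hbB2 hc0B hnotB1 hc0all).elim
  · -- B₁ ∩ B₂ = ∅
    have hx2Q : x2 ∈ Q := (Finset.mem_filter.mp hx2B).1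
    have hy2Q : y2 ∈ Q := (Finset.mem_filter.mp hy2B).1
    have hx2c : χ s2 x2 = !d := (Finset.mem_filter.mp hx2B).2
    have hy2c : χ s2 y2 = !d := (Finset.mem_filter.mp hy2B).2
    have hx2a : x2 ≠ a := fun h => haB2 (h ▸ hx2c)
    have hx2b : x2 ≠ b := fun h => hbB2 (h ▸ hx2c)
    have hy2a : y2 ≠ a := fun h => haB2 (h ▸ hy2c)
    have hy2b : y2 ≠ b := fun h => hbB2 (h ▸ hy2c)
    have hs1x2 : χ s1 x2 = d := hnotB1 x2 hx2Q hx2a hx2b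
    have hs1y2 : χ s1 y2 = d := hnotB1 y2 hy2Q hy2a hy2b
    have hs2a : χ s2 a = d := bool_resolve' haB2
    have hs2b : χ s2 b = d := bool_resolve' hbB2
    have hx2y2d : χ x2 y2 = d := bool_resolve' (noT2 x2 hx2Q y2 hy2Q hx2y2 hx2c hy2c)
    exact (West x2 y2 a b hx2Q hy2Q haQ hbQ hx2y2 hab hx2a hx2b hy2a hy2b
      hs1x2 hs1y2 hs2a hs2b hx2y2d habd).elim



lemma base (hs : ∀ a b, χ a b = χ b a) {V : Finset α} (h10 : 10 ≤ V.card) :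
    ∃ (c : Bool) (T : Finset (Finset α)), T.card = 2 ∧
      (↑T : Set (Finset α)).Pairwise (fun a b => Disjoint a b) ∧
      ∀ t ∈ T, Mo χ c t ∧ t ⊆ V := by
  by_contra hcon
  have Hdis : ∀ c t1 t2, Mo χ c t1 → Mo χ c t2 → t1 ⊆ V → t2 ⊆ V → ¬ Disjoint t1 t2 := by
    intro c t1 t2 h1 h2 hsub1 hsub2 hdis
    apply hcon
    have hne : t1 ≠ t2 := by
      intro h
      subst h
      rw [disjoint_self] at hdis
      have h3 := h1.1
      rw [hdis] at h3
      simp at h3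
    refine ⟨c, {t1, t2}, ?_, ?_, ?_⟩
    · rw [Finset.card_insert_of_notMem (by simpa using hne), Finset.card_singleton]
    · rw [Finset.coe_insert, Finset.coe_singleton]
      intro u hu w hw huw
      simp only [Set.mem_insert_iff, Set.mem_singleton_iff] at hu hw
      rcases hu with rfl | rfl <;> rcases hw with rfl | rfl
      · exact absurd rfl huw
      · exact hdis
      · exact hdis.symm
      · exact absurd rfl huw
    · intro t ht
      simp only [Finset.mem_insert, Finset.mem_singleton] at ht
      rcases ht with rfl | rfl
      exacts [⟨h1, hsub1⟩, ⟨h2, hsub2⟩]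
  have hex : ∀ c : Bool, ∃ t, Mo χ c t ∧ t ⊆ V := by
    intro c
    by_contra hno
    push_neg at hno
    have hno' : ∀ t, t ⊆ V → ¬ Mo χ (!(!c)) t := by
      intro t htV hmo
      rw [Bool.not_not] at hmo
      exact hno t hmo htV
    obtain ⟨T, hT2, hTpw, hTmem⟩ := greedy hs (!c) 2 V (by omega) hno'
    exact hcon ⟨!c, T, hT2, hTpw, hTmem⟩
  obtain ⟨c, v, a, b, x, y, hvV, haV, hbV, hxV, hyV, hva, hvb, hvx, hvy, hab0, hax, hay,
    hbx, hby, hxy, f1, f2, f3, g1, g2, g3⟩ := bowtie hs (hex true) (hex false)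
  have hS5 : ({v, a, b, x, y} : Finset α).card = 5 := by
    rw [Finset.card_insert_of_notMem (by simp [hva, hvb, hvx, hvy]),
        Finset.card_insert_of_notMem (by simp [hab0, hax, hay]),
        Finset.card_insert_of_notMem (by simp [hbx, hby]),
        Finset.card_insert_of_notMem (by simp [hxy]),
        Finset.card_singleton]
  have hSV : ({v, a, b, x, y} : Finset α) ⊆ V := by
    intro u hu
    simp only [Finset.mem_insert, Finset.mem_singleton] at hu
    rcases hu with rfl | rfl | rfl | rfl | rfl <;> assumption
  have hQ0 : 5 ≤ (V \ ({v, a, b, x, y} : Finset α)).card := by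
    rw [Finset.card_sdiff_of_subset hSV, hS5]; omega
  obtain ⟨Q, hQsub, hQ5⟩ := Finset.exists_subset_card_eq (s := V \ ({v, a, b, x, y} : Finset α)) (n := 5) hQ0
  have hQV : Q ⊆ V := hQsub.trans Finset.sdiff_subset
  have hQS : ∀ u ∈ Q, u ∉ ({v, a, b, x, y} : Finset α) :=
    fun u hu => (Finset.mem_sdiff.mp (hQsub hu)).2
  have hvQn : v ∉ Q := fun h => hQS v h (by simp)
  have haQn : a ∉ Q := fun h => hQS a h (by simp)
  have hbQn : b ∉ Q := fun h => hQS b h (by simp)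
  have hxQn : x ∉ Q := fun h => hQS x h (by simp)
  have hyQn : y ∉ Q := fun h => hQS y h (by simp)
  have hQno : ∀ c' t, t ⊆ Q → ¬ Mo χ c' t := by
    intro c' t htQ hmo
    have hdisS : ∀ (z1 z2 z3 : α), z1 ∈ ({v, a, b, x, y} : Finset α) →
        z2 ∈ ({v, a, b, x, y} : Finset α) → z3 ∈ ({v, a, b, x, y} : Finset α) →
        Disjoint t ({z1, z2, z3} : Finset α) := by
      intro z1 z2 z3 h1 h2 h3
      refine Finset.disjoint_left.mpr fun u hu hu' => ?_
      simp only [Finset.mem_insert, Finset.mem_singleton] at hu'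
      rcases hu' with rfl | rfl | rfl
      exacts [hQS u (htQ hu) h1, hQS u (htQ hu) h2, hQS u (htQ hu) h3]
    by_cases hcc : c' = c
    · subst hcc
      exact Hdis c' t {v, a, b} hmo (mk_mono hs hva hvb hab0 f1 f2 f3)
        (htQ.trans hQV) (tri_subset hvV haV hbV)
        (hdisS v a b (by simp) (by simp) (by simp))
    · rw [bool_resolve hcc] at hmo
      exact Hdis (!c) t {v, x, y} hmo (mk_mono hs hvx hvy hxy g1 g2 g3)
        (htQ.trans hQV) (tri_subset hvV hxV hyV)
        (hdisS v x y (by simp) (by simp) (by simp))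
  have core1 := coreSide hs hQV hQ5 hQno Hdis hvV haV hbV hxV hyV
    hvQn haQn hbQn hxQn hyQn hva hvb hvx hvy hab0 hax hay hbx hby hxy
    f1 f2 f3 g1 g2 g3
  have core2 := coreSide hs hQV hQ5 hQno Hdis hvV hxV hyV haV hbV
    hvQn hxQn hyQn haQn hbQn hvx hvy hva hvb hxy (Ne.symm hax) (Ne.symm hbx)
    (Ne.symm hay) (Ne.symm hby) hab0
    g1 g2 g3 (by rw [Bool.not_not]; exact f1) (by rw [Bool.not_not]; exact f2)
    (by rw [Bool.not_not]; exact f3)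
  have concl : ∀ cc : Bool, ∀ p ∈ Q, ∀ q ∈ Q, p ≠ q → χ v p = cc → χ v q = cc →
      χ p q ≠ cc := by
    intro cc
    by_cases hcc : cc = c
    · subst hcc; exact core1
    · rw [bool_resolve hcc]; exact core2
  have hsplitQ := Finset.card_filter_add_card_filter_not
    (s := Q) (p := fun q => χ v q = true)
  simp only [Bool.not_eq_true] at hsplitQ
  have hle : ∀ cc : Bool, (Q.filter fun q => χ v q = cc).card ≤ 2 := by
    intro cc
    by_contra hgt
    push_neg at hgt
    obtain ⟨p, q, hp, hq, hpq, hpqc⟩ := pairIn hs hQno cc (Finset.filter_subset _ _) hgt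
    simp only [Finset.mem_filter] at hp hq
    exact concl cc p hp.1 q hq.1 hpq hp.2 hq.2 hpqc
  have h1 := hle true
  have h2 := hle false
  omega

lemma upper (hs : ∀ a b, χ a b = χ b a) :
    ∀ m : ℕ, 2 ≤ m → ∀ V : Finset α, 5 * m ≤ V.card →
    ∃ (c : Bool) (T : Finset (Finset α)), T.card = m ∧
      (↑T : Set (Finset α)).Pairwise (fun a b => Disjoint a b) ∧
      ∀ t ∈ T, Mo χ c t ∧ t ⊆ V := by
  intro m hm
  induction m, hm using Nat.le_induction with
  | base => intro V hV; exact base hs (by omega)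
  | succ m hm ih =>
    intro V hV
    by_cases hex : ∀ cc : Bool, ∃ t, Mo χ cc t ∧ t ⊆ V
    · obtain ⟨c, v, a, b, x, y, hvV, haV, hbV, hxV, hyV, hva, hvb, hvx, hvy, hab0, hax, hay,
        hbx, hby, hxy, f1, f2, f3, g1, g2, g3⟩ := bowtie hs (hex true) (hex false)
      have hS5 : ({v, a, b, x, y} : Finset α).card = 5 := by
        rw [Finset.card_insert_of_notMem (by simp [hva, hvb, hvx, hvy]),
            Finset.card_insert_of_notMem (by simp [hab0, hax, hay]),
            Finset.card_insert_of_notMem (by simp [hbx, hby]),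
            Finset.card_insert_of_notMem (by simp [hxy]),
            Finset.card_singleton]
      have hSV : ({v, a, b, x, y} : Finset α) ⊆ V := by
        intro u hu
        simp only [Finset.mem_insert, Finset.mem_singleton] at hu
        rcases hu with rfl | rfl | rfl | rfl | rfl <;> assumption
      have hV' : 5 * m ≤ (V \ ({v, a, b, x, y} : Finset α)).card := by
        rw [Finset.card_sdiff_of_subset hSV, hS5]; omega
      obtain ⟨c', T, hTcard, hTpw, hTmem⟩ := ih (V \ ({v, a, b, x, y} : Finset α)) hV'
      have h0 : ∃ t0 : Finset α, Mo χ c' t0 ∧ t0 ⊆ ({v, a, b, x, y} : Finset α) := by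
        by_cases hcc : c' = c
        · subst hcc
          exact ⟨{v, a, b}, mk_mono hs hva hvb hab0 f1 f2 f3,
            tri_subset (by simp) (by simp) (by simp)⟩
        · rw [bool_resolve hcc]
          exact ⟨{v, x, y}, mk_mono hs hvx hvy hxy g1 g2 g3,
            tri_subset (by simp) (by simp) (by simp)⟩
      obtain ⟨t0, ht0mo, ht0S⟩ := h0
      have ht0V : t0 ⊆ V := ht0S.trans hSV
      have hdisj0 : ∀ t ∈ T, Disjoint t0 t := by
        intro t ht
        exact Finset.disjoint_left.mpr fun u hu0 hut =>
          (Finset.mem_sdiff.mp ((hTmem t ht).2 hut)).2 (ht0S hu0)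
      have ht0T : t0 ∉ T := by
        intro h
        have hd := hdisj0 t0 h
        rw [disjoint_self] at hd
        have h3 := ht0mo.1
        rw [hd] at h3
        simp at h3
      refine ⟨c', insert t0 T, ?_, ?_, ?_⟩
      · rw [Finset.card_insert_of_notMem ht0T, hTcard]
      · rw [Finset.coe_insert]
        refine (Set.pairwise_insert_of_symmetric_of_notMem
          (r := fun a b => Disjoint a b) (by simpa using ht0T)).mpr ⟨hTpw, ?_⟩
        intro u hu
        exact hdisj0 u (by simpa using hu)
      · intro t ht
        rcases Finset.mem_insert.mp ht with rfl | ht'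
        · exact ⟨ht0mo, ht0V⟩
        · exact ⟨(hTmem t ht').1, (hTmem t ht').2.trans Finset.sdiff_subset⟩
    · push_neg at hex
      obtain ⟨cc, hno⟩ := hex
      have hno' : ∀ t, t ⊆ V → ¬ Mo χ (!(!cc)) t := by
        intro t htV hmo
        rw [Bool.not_not] at hmo
        exact hno t hmo htV
      obtain ⟨T, hTc, hTpw, hTmem⟩ := greedy hs (!cc) (m + 1) V (by omega) hno'
      exact ⟨!cc, T, hTc, hTpw, hTmem⟩



lemma two_others {n : ℕ} (t : Finset (Fin n)) (x : Fin n) (h3 : t.card = 3) (hx : x ∈ t) :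
    ∃ y z, y ∈ t ∧ z ∈ t ∧ y ≠ z ∧ y ≠ x ∧ z ≠ x := by
  have h2 : (t.erase x).card = 2 := by rw [Finset.card_erase_of_mem hx, h3]
  obtain ⟨y, z, hyz, he⟩ := Finset.card_eq_two.mp h2
  have hy : y ∈ t.erase x := by rw [he]; simp
  have hz : z ∈ t.erase x := by rw [he]; simp
  exact ⟨y, z, Finset.mem_of_mem_erase hy, Finset.mem_of_mem_erase hz, hyz,
    Finset.ne_of_mem_erase hy, Finset.ne_of_mem_erase hz⟩

theorem lower (m : ℕ) (hm : 2 ≤ m) :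
    ∃ χ : Fin (5 * m - 1) → Fin (5 * m - 1) → Bool,
      (∀ a b, χ a b = χ b a) ∧
      ¬ ∃ (c : Bool) (T : Finset (Finset (Fin (5 * m - 1)))),
        T.card = m ∧
        (↑T : Set (Finset (Fin (5 * m - 1)))).Pairwise (fun a b => Disjoint a b) ∧
        ∀ t ∈ T, MonoTriC χ c t := by
  refine ⟨fun a b => decide ((a.val < 3 * m - 1 ∧ b.val < 3 * m - 1) ∨
      (3 * m - 1 ≤ a.val ∧ 3 * m - 1 ≤ b.val ∧ (a.val = 3 * m - 1 ∨ b.val = 3 * m - 1))),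
      ?_, ?_⟩
  · intro a b
    simp only [decide_eq_decide]
    tauto
  rintro ⟨c, T, hTcard, hTpw, hTmono⟩
  have hTdisj : ∀ x ∈ T, ∀ y ∈ T, x ≠ y → Disjoint x y := by
    intro x hx y hy hxy
    exact hTpw (Finset.mem_coe.mpr hx) (Finset.mem_coe.mpr hy) hxy
  cases c with
  | true =>
    -- every red triangle lives inside {x : x.val < 3m-1}
    have hsub : ∀ t ∈ T, ∀ x ∈ t, x.val < 3 * m - 1 := by
      intro t ht x hx
      by_contra hxK
      push_neg at hxK
      have hmono := hTmono t ht
      obtain ⟨y, z, hy, hz, hyz, hyx, hzx⟩ := two_others t x hmono.1 hx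
      have hxy := hmono.2 x hx y hy (Ne.symm hyx)
      have hxz := hmono.2 x hx z hz (Ne.symm hzx)
      simp only [decide_eq_true_eq] at hxy hxz
      by_cases hxeq : x.val = 3 * m - 1
      · -- y, z both have val > 3m-1
        have hy' : 3 * m - 1 ≤ y.val := by rcases hxy with h | h; omega; exact h.2.1
        have hz' : 3 * m - 1 ≤ z.val := by rcases hxz with h | h; omega; exact h.2.1
        have hyK : y.val ≠ 3 * m - 1 := fun h => hyx (Fin.ext (by omega))
        have hzK : z.val ≠ 3 * m - 1 := fun h => hzx (Fin.ext (by omega))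
        have hcyz := hmono.2 y hy z hz hyz
        simp only [decide_eq_true_eq] at hcyz
        rcases hcyz with h | h
        · omega
        · rcases h.2.2 with h' | h' <;> omega
      · -- x.val > 3m-1 : then y.val = z.val = 3m-1 forcing y = z
        have hy' : y.val = 3 * m - 1 := by
          rcases hxy with h | h
          · omega
          · rcases h.2.2 with h' | h' <;> omega
        have hz' : z.val = 3 * m - 1 := by
          rcases hxz with h | h
          · omega
          · rcases h.2.2 with h' | h' <;> omega
        exact hyz (Fin.ext (by omega))
    -- counting
    have hbUsub : (T.biUnion fun t => t) ⊆ Finset.univ.filter fun x : Fin (5 * m - 1) =>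
        x.val < 3 * m - 1 := by
      intro x hx
      obtain ⟨t, ht, hxt⟩ := Finset.mem_biUnion.mp hx
      exact Finset.mem_filter.mpr ⟨Finset.mem_univ x, hsub t ht x hxt⟩
    have hbUcard : ((T.biUnion fun t => t).card) = 3 * m := by
      rw [Finset.card_biUnion hTdisj]
      have : ∀ t ∈ T, t.card = 3 := fun t ht => (hTmono t ht).1
      rw [Finset.sum_congr rfl this, Finset.sum_const, smul_eq_mul, hTcard]
      ring
    have hAcard : (Finset.univ.filter fun x : Fin (5 * m - 1) =>
        x.val < 3 * m - 1).card ≤ 3 * m - 1 := by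
      have : (Finset.univ.filter fun x : Fin (5 * m - 1) => x.val < 3 * m - 1).card ≤
          (Finset.range (3 * m - 1)).card := by
        apply Finset.card_le_card_of_injOn (fun x => x.val)
        · intro x hx
          rw [Finset.mem_coe, Finset.mem_filter] at hx
          exact Finset.mem_range.mpr hx.2
        · intro x _ y _ h
          exact Fin.ext h
      simpa using this
    have := Finset.card_le_card hbUsub
    omega
  | false =>
    -- every blue triangle has ≥ 2 elements with val ≥ 3m
    have h2 : ∀ t ∈ T, 2 ≤ (t.filter fun x : Fin (5 * m - 1) => 3 * m ≤ x.val).card := by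
      intro t ht
      have hmono := hTmono t ht
      have hnoK : ∀ x ∈ t, x.val ≠ 3 * m - 1 := by
        intro x hx hxK
        obtain ⟨y, z, hy, hz, hyz, hyx, hzx⟩ := two_others t x hmono.1 hx
        have hxy := hmono.2 x hx y hy (Ne.symm hyx)
        have hxz := hmono.2 x hx z hz (Ne.symm hzx)
        have hcyz := hmono.2 y hy z hz hyz
        simp only [decide_eq_false_iff_not] at hxy hxz hcyz
        push_neg at hxy hxz hcyz
        have hy' : y.val < 3 * m - 1 := by
          by_contra hy2
          push_neg at hy2
          exact (hxy.2 (by omega) hy2).1 hxK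
        have hz' : z.val < 3 * m - 1 := by
          by_contra hz2
          push_neg at hz2
          exact (hxz.2 (by omega) hz2).1 hxK
        have := hcyz.1 hy'
        omega
      have hle1 : (t.filter fun x : Fin (5 * m - 1) => x.val < 3 * m - 1).card ≤ 1 := by
        by_contra hgt
        push_neg at hgt
        obtain ⟨y, hy, z, hz, hyz⟩ := Finset.one_lt_card.mp hgt
        simp only [Finset.mem_filter] at hy hz
        have := hmono.2 y hy.1 z hz.1 hyz
        simp only [decide_eq_false_iff_not] at this
        exact this (Or.inl ⟨hy.2, hz.2⟩)
      have hsplit := Finset.card_filter_add_card_filter_not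
        (s := t) (p := fun x : Fin (5 * m - 1) => x.val < 3 * m - 1)
      have hsub2 : (t.filter fun x : Fin (5 * m - 1) => ¬ x.val < 3 * m - 1) ⊆
          t.filter fun x : Fin (5 * m - 1) => 3 * m ≤ x.val := by
        intro x hx
        simp only [Finset.mem_filter] at hx ⊢
        have := hnoK x hx.1
        exact ⟨hx.1, by omega⟩
      have hc1 := Finset.card_le_card hsub2
      have hc3 := hmono.1
      omega
    have hdisjF : ∀ x ∈ T, ∀ y ∈ T, x ≠ y →
        Disjoint (x.filter fun u : Fin (5 * m - 1) => 3 * m ≤ u.val)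
          (y.filter fun u : Fin (5 * m - 1) => 3 * m ≤ u.val) := by
      intro x hx y hy hxy
      exact Finset.disjoint_filter_filter (hTdisj x hx y hy hxy)
    have hbUcard : 2 * m ≤ (T.biUnion fun t =>
        t.filter fun u : Fin (5 * m - 1) => 3 * m ≤ u.val).card := by
      rw [Finset.card_biUnion hdisjF]
      calc 2 * m = ∑ _t ∈ T, 2 := by rw [Finset.sum_const, smul_eq_mul, hTcard]; ring
      _ ≤ ∑ t ∈ T, (t.filter fun u : Fin (5 * m - 1) => 3 * m ≤ u.val).card :=
        Finset.sum_le_sum h2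
    have hbUsub : (T.biUnion fun t =>
        t.filter fun u : Fin (5 * m - 1) => 3 * m ≤ u.val) ⊆
        Finset.univ.filter fun u : Fin (5 * m - 1) => 3 * m ≤ u.val := by
      intro x hx
      obtain ⟨t, _, hxt⟩ := Finset.mem_biUnion.mp hx
      simp only [Finset.mem_filter] at hxt ⊢
      exact ⟨Finset.mem_univ x, hxt.2⟩
    have hWcard : (Finset.univ.filter fun u : Fin (5 * m - 1) =>
        3 * m ≤ u.val).card ≤ 2 * m - 1 := by
      have h1 : (Finset.univ.filter fun u : Fin (5 * m - 1) => 3 * m ≤ u.val).card ≤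
          (Finset.Ico (3 * m) (5 * m - 1)).card := by
        apply Finset.card_le_card_of_injOn (fun x => x.val)
        · intro x hx
          rw [Finset.mem_coe, Finset.mem_filter] at hx
          exact Finset.mem_Ico.mpr ⟨hx.2, x.isLt⟩
        · intro x _ y _ h
          exact Fin.ext h
      rw [Nat.card_Ico] at h1
      omega
    have := Finset.card_le_card hbUsub
    omega


end BES

/-- Burr–Erdős–Spencer: `R(mK_3) = 5m` for `m ≥ 2`. Every 2-edge-colouring of `K_{5m}`
contains `m` pairwise vertex-disjoint triangles all monochromatic in the same colour,
and some 2-edge-colouring of `K_{5m-1}` contains no such collection. -/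
theorem burr_erdos_spencer (m : ℕ) (hm : 2 ≤ m) :
    (∀ χ : Fin (5 * m) → Fin (5 * m) → Bool, (∀ a b, χ a b = χ b a) →
      ∃ (c : Bool) (T : Finset (Finset (Fin (5 * m)))),
        T.card = m ∧
        (↑T : Set (Finset (Fin (5 * m)))).Pairwise (fun a b => Disjoint a b) ∧
        ∀ t ∈ T, MonoTriC χ c t) ∧
    (∃ χ : Fin (5 * m - 1) → Fin (5 * m - 1) → Bool,
      (∀ a b, χ a b = χ b a) ∧
      ¬ ∃ (c : Bool) (T : Finset (Finset (Fin (5 * m - 1)))),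
        T.card = m ∧
        (↑T : Set (Finset (Fin (5 * m - 1)))).Pairwise (fun a b => Disjoint a b) ∧
        ∀ t ∈ T, MonoTriC χ c t) := by
  constructor
  · intro χ hs
    obtain ⟨c, T, hTcard, hTpw, hTmem⟩ := BES.upper hs m hm Finset.univ (by simp)
    exact ⟨c, T, hTcard, hTpw, fun t ht => (hTmem t ht).1⟩
  · exact BES.lower m hm
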